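/- arXiv:quant-ph/0612063 — 2 statements merged into one kernel-verified Lean document; each statement's English description precedes it below -/
import Mathlib

section
/- Let S be an n×n positive semidefinite Hermitian matrix with S ≤ I (all eigenvalues in [0,1]), and let D be a diagonal matrix with ‖D‖_F = 1. If ‖(S − S²) D‖_F² ≤ ε, then, diagonalizing S = U Z U† and letting P = U Z' U† where Z' is obtained from Z by rounding each eigenvalue to the nearest integer in {0,1}, P is an orthogonal projector and ‖(S − P) D‖_F² ≤ 4ε. -/
open Matrix
open scoped ComplexOrder

noncomputable def frobSq {I J : Type*} [Fintype I] [Fintype J] (A : Matrix I J ℂ) : ℝ :=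
  ∑ i, ∑ j, ‖A i j‖ ^ 2

lemma frobSq_eq_trace {n : ℕ} (A : Matrix (Fin n) (Fin n) ℂ) :
    frobSq A = ((Aᴴ * A).trace).re := by
  simp only [frobSq, Matrix.trace, Matrix.diag, Matrix.mul_apply, Matrix.conjTranspose_apply]
  rw [Complex.re_sum]
  rw [Finset.sum_comm]
  congr 1; ext i
  rw [Complex.re_sum]
  congr 1; ext j
  rw [show star (A j i) * A j i = ((Complex.normSq (A j i) : ℝ) : ℂ) from Complex.normSq_eq_conj_mul_self ▸ rfl]
  simp [Complex.sq_norm]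

lemma frobSq_unitary_mul {n : ℕ} {U : Matrix (Fin n) (Fin n) ℂ}
    (hU : U ∈ Matrix.unitaryGroup (Fin n) ℂ) (A : Matrix (Fin n) (Fin n) ℂ) :
    frobSq (U * A) = frobSq A := by
  have h1 : Uᴴ * U = 1 := (Matrix.mem_unitaryGroup_iff'.mp hU)
  rw [frobSq_eq_trace, frobSq_eq_trace, Matrix.conjTranspose_mul]
  rw [show Aᴴ * Uᴴ * (U * A) = Aᴴ * (Uᴴ * U) * A by noncomm_ring]
  rw [h1, Matrix.mul_one]

lemma frobSq_conj {n : ℕ} {U : Matrix (Fin n) (Fin n) ℂ}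
    (hU : U ∈ Matrix.unitaryGroup (Fin n) ℂ) (v α : Fin n → ℂ) :
    frobSq (U * Matrix.diagonal v * Uᴴ * Matrix.diagonal α)
      = ∑ i, ∑ j, ‖v i‖ ^ 2 * (‖Uᴴ i j‖ ^ 2 * ‖α j‖ ^ 2) := by
  rw [show U * Matrix.diagonal v * Uᴴ * Matrix.diagonal α
      = U * (Matrix.diagonal v * (Uᴴ * Matrix.diagonal α)) by noncomm_ring,
    frobSq_unitary_mul hU]
  simp only [frobSq, Matrix.diagonal_mul, Matrix.mul_diagonal, norm_mul, mul_pow]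

lemma key_mul {n : ℕ} {U : Matrix (Fin n) (Fin n) ℂ}
    (hU : U ∈ Matrix.unitaryGroup (Fin n) ℂ) (v w : Fin n → ℂ) :
    (U * Matrix.diagonal v * Uᴴ) * (U * Matrix.diagonal w * Uᴴ)
      = U * Matrix.diagonal (fun i => v i * w i) * Uᴴ := by
  have h1 : Uᴴ * U = 1 := Matrix.mem_unitaryGroup_iff'.mp hU
  rw [show (U * Matrix.diagonal v * Uᴴ) * (U * Matrix.diagonal w * Uᴴ)
      = U * (Matrix.diagonal v * ((Uᴴ * U) * (Matrix.diagonal w * Uᴴ))) by noncomm_ring, h1,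
    one_mul, ← Matrix.mul_assoc (Matrix.diagonal v), Matrix.diagonal_mul_diagonal]
  noncomm_ring

/-- Rounding the eigenvalues of a PSD contraction `S` with `‖(S − S²)D‖_F² ≤ ε`
yields an orthogonal projector `P = U Z' Uᴴ` with `‖(S − P)D‖_F² ≤ 4ε`. -/
theorem stmt5 {n : ℕ} (ε : ℝ) (S Umat : Matrix (Fin n) (Fin n) ℂ)
    (z μ : Fin n → ℝ) (α : Fin n → ℂ)
    (hS : S.PosSemidef) (hSle : (1 - S).PosSemidef)
    (hU : Umat ∈ Matrix.unitaryGroup (Fin n) ℂ)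
    (hdiag : S = Umat * Matrix.diagonal (fun i => (z i : ℂ)) * Umatᴴ)
    (hz : ∀ i, 0 ≤ z i ∧ z i ≤ 1)
    (hμ : ∀ i, (μ i = 0 ∧ z i ≤ 1 / 2) ∨ (μ i = 1 ∧ 1 / 2 ≤ z i))
    (hD : frobSq (Matrix.diagonal α) = 1)
    (hyp : frobSq ((S - S * S) * Matrix.diagonal α) ≤ ε) :
    (Umat * Matrix.diagonal (fun i => (μ i : ℂ)) * Umatᴴ).IsHermitian ∧
    (Umat * Matrix.diagonal (fun i => (μ i : ℂ)) * Umatᴴ) *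
        (Umat * Matrix.diagonal (fun i => (μ i : ℂ)) * Umatᴴ)
      = Umat * Matrix.diagonal (fun i => (μ i : ℂ)) * Umatᴴ ∧
    frobSq ((S - Umat * Matrix.diagonal (fun i => (μ i : ℂ)) * Umatᴴ) * Matrix.diagonal α)
      ≤ 4 * ε := by
  have hDH : (Matrix.diagonal (fun i => (μ i : ℂ)))ᴴ = Matrix.diagonal (fun i => (μ i : ℂ)) := by
    simp [Matrix.diagonal_conjTranspose, Pi.star_def, Complex.conj_ofReal]
  refine ⟨?_, ?_, ?_⟩
  · show _ᴴ = _
    simp [Matrix.conjTranspose_mul, hDH, Matrix.mul_assoc]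
  · rw [key_mul hU, show (fun i => (μ i : ℂ) * μ i) = (fun i => (μ i : ℂ)) from
      funext fun i => by rcases hμ i with ⟨h, _⟩ | ⟨h, _⟩ <;> simp [h]]
  · have hSP : S - Umat * Matrix.diagonal (fun i => (μ i : ℂ)) * Umatᴴ
        = Umat * Matrix.diagonal (fun i => ((z i - μ i : ℝ) : ℂ)) * Umatᴴ := by
      rw [hdiag, show ∀ A B : Matrix (Fin n) (Fin n) ℂ,
        Umat * A * Umatᴴ - Umat * B * Umatᴴ = Umat * (A - B) * Umatᴴ from
        fun A B => by noncomm_ring, Matrix.diagonal_sub]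
      congr 2
      ext i
      push_cast
      rfl
    have hSS : S - S * S
        = Umat * Matrix.diagonal (fun i => ((z i - z i * z i : ℝ) : ℂ)) * Umatᴴ := by
      rw [hdiag, key_mul hU, show ∀ A B : Matrix (Fin n) (Fin n) ℂ,
        Umat * A * Umatᴴ - Umat * B * Umatᴴ = Umat * (A - B) * Umatᴴ from
        fun A B => by noncomm_ring, Matrix.diagonal_sub]
      congr 2
      ext i
      push_cast
      rfl
    rw [hSP, frobSq_conj hU]
    rw [hSS, frobSq_conj hU] at hyp
    have hle : ∑ i, ∑ j, ‖((z i - μ i : ℝ) : ℂ)‖ ^ 2 * (‖Umatᴴ i j‖ ^ 2 * ‖α j‖ ^ 2)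
        ≤ ∑ i, ∑ j, 4 * (‖((z i - z i * z i : ℝ) : ℂ)‖ ^ 2 * (‖Umatᴴ i j‖ ^ 2 * ‖α j‖ ^ 2)) := by
      refine Finset.sum_le_sum fun i _ => Finset.sum_le_sum fun j _ => ?_
      have h1 : ‖((z i - μ i : ℝ) : ℂ)‖ ^ 2 = (z i - μ i) ^ 2 := by
        rw [Complex.norm_real, Real.norm_eq_abs, sq_abs]
      have h2 : ‖((z i - z i * z i : ℝ) : ℂ)‖ ^ 2 = (z i - z i * z i) ^ 2 := by
        rw [Complex.norm_real, Real.norm_eq_abs, sq_abs]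
      have hkey : (z i - μ i) ^ 2 ≤ 4 * (z i - z i * z i) ^ 2 := by
        obtain ⟨hz0, hz1⟩ := hz i
        rcases hμ i with ⟨h, hh⟩ | ⟨h, hh⟩ <;> rw [h]
        · nlinarith [mul_nonneg (mul_nonneg (mul_nonneg hz0 hz0)
            (by linarith : (0:ℝ) ≤ 1 - 2 * z i)) (by linarith : (0:ℝ) ≤ 3 - 2 * z i)]
        · nlinarith [mul_nonneg (mul_nonneg (mul_nonneg (by linarith : (0:ℝ) ≤ 1 - z i)
            (by linarith : (0:ℝ) ≤ 1 - z i)) (by linarith : (0:ℝ) ≤ 2 * z i - 1))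
            (by linarith : (0:ℝ) ≤ 2 * z i + 1)]
      rw [h1, h2]
      have hX : (0:ℝ) ≤ ‖Umatᴴ i j‖ ^ 2 * ‖α j‖ ^ 2 := by positivity
      exact le_trans (mul_le_mul_of_nonneg_right hkey hX) (le_of_eq (by ring))
    calc ∑ i, ∑ j, ‖((z i - μ i : ℝ) : ℂ)‖ ^ 2 * (‖Umatᴴ i j‖ ^ 2 * ‖α j‖ ^ 2) ≤ _ := hle
      _ = 4 * ∑ i, ∑ j, ‖((z i - z i * z i : ℝ) : ℂ)‖ ^ 2 * (‖Umatᴴ i j‖ ^ 2 * ‖α j‖ ^ 2) := by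
          rw [Finset.mul_sum]; congr 1; ext i; rw [Finset.mul_sum]
      _ ≤ 4 * ε := by linarith
end

section
/- Any two orthogonal projectors P and Q on a finite-dimensional complex Hilbert space admit a common orthonormal basis in which both are block diagonal with blocks of size at most 2×2. -/
open Matrix

section Aux
open Module Submodule

lemma exists_invariant_sub (E : Type) [NormedAddCommGroup E] [InnerProductSpace ℂ E]
    [FiniteDimensional ℂ E] (hpos : 0 < finrank ℂ E)
    (P Q : E →ₗ[ℂ] E) (hP2 : P ∘ₗ P = P) (hQ2 : Q ∘ₗ Q = Q) :
    ∃ W : Submodule ℂ E, 0 < finrank ℂ W ∧ finrank ℂ W ≤ 2 ∧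
      (∀ x ∈ W, P x ∈ W) ∧ (∀ x ∈ W, Q x ∈ W) := by
  classical
  have hQ2' : ∀ x, Q (Q x) = Q x := fun x => by conv_rhs => rw [← hQ2, LinearMap.comp_apply]
  have hP2' : ∀ x, P (P x) = P x := fun x => by conv_rhs => rw [← hP2, LinearMap.comp_apply]
  -- find a vector a with P a ∈ span-friendly form
  by_cases hr : LinearMap.range P = ⊥
  · -- P = 0; take an eigenvector of Q
    have : Nontrivial E := Module.finrank_pos_iff.1 hpos
    obtain ⟨μ, hμ⟩ := Module.End.exists_eigenvalue (Q : Module.End ℂ E)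
    obtain ⟨a, ha⟩ := hμ.exists_hasEigenvector
    have ha0 : a ≠ 0 := ha.right
    have haQ : Q a = μ • a := ha.apply_eq_smul
    refine ⟨span ℂ {a}, ?_, ?_, ?_, ?_⟩
    · rw [finrank_span_singleton ha0]; norm_num
    · rw [finrank_span_singleton ha0]; norm_num
    · intro x hx
      have : P x ∈ LinearMap.range P := LinearMap.mem_range_self _ _
      rw [hr] at this
      simp only [Submodule.mem_bot] at this
      rw [this]; exact Submodule.zero_mem _
    · intro x hx
      rw [Submodule.mem_span_singleton] at hx
      obtain ⟨c, rfl⟩ := hx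
      rw [_root_.map_smul, haQ]
      exact Submodule.smul_mem _ _ (Submodule.smul_mem _ _ (Submodule.mem_span_singleton_self a))
  · -- range P nontrivial
    set V := LinearMap.range P with hV
    have hVne : Nontrivial V := by
      rw [Submodule.nontrivial_iff_ne_bot]; exact hr
    have hmemV : ∀ x ∈ V, P x = x := by
      rintro x ⟨y, rfl⟩
      exact hP2' y
    have hinv : ∀ x ∈ V, (P ∘ₗ Q) x ∈ V := fun x _ => LinearMap.mem_range_self _ _
    set T : V →ₗ[ℂ] V := (P ∘ₗ Q).restrict hinv with hT
    obtain ⟨μ, hμ⟩ := Module.End.exists_eigenvalue (T : Module.End ℂ V)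
    obtain ⟨a, ha⟩ := hμ.exists_hasEigenvector
    have ha0 : (a : E) ≠ 0 := fun h => ha.right (Subtype.ext h)
    have haT : P (Q (a : E)) = μ • (a : E) := by
      have := congrArg (Subtype.val) ha.apply_eq_smul
      simpa [hT, LinearMap.restrict_coe_apply] using this
    have haP : P (a : E) = (a : E) := hmemV _ a.2
    refine ⟨span ℂ {(a : E), Q a}, ?_, ?_, ?_, ?_⟩
    · have : (a : E) ∈ span ℂ {(a : E), Q (a:E)} :=
        Submodule.subset_span (by simp)
      have h1 : 0 < finrank ℂ (span ℂ {(a:E)}) := by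
        rw [finrank_span_singleton ha0]; norm_num
      refine lt_of_lt_of_le h1 ?_
      apply Submodule.finrank_mono
      apply Submodule.span_mono
      simp
    · have := finrank_span_le_card (R := ℂ) ({(a:E), Q (a:E)} : Set E)
      refine this.trans ?_
      have : ({(a:E), Q (a:E)} : Set E).toFinset = insert (a:E) {Q (a:E)} := by
        simp
      rw [this]
      exact (Finset.card_insert_le _ _).trans (by simp)
    · intro x hx
      induction hx using Submodule.span_induction with
      | mem x hx =>
        rcases hx with h | h
        · rw [h, haP]; exact Submodule.subset_span (by simp)
        · simp only [Set.mem_singleton_iff] at h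
          rw [h, haT]
          exact Submodule.smul_mem _ _ (Submodule.subset_span (by simp))
      | zero => simp
      | add x y _ _ hx hy => rw [map_add]; exact Submodule.add_mem _ hx hy
      | smul c x _ hx => rw [_root_.map_smul]; exact Submodule.smul_mem _ _ hx
    · intro x hx
      induction hx using Submodule.span_induction with
      | mem x hx =>
        rcases hx with h | h
        · rw [h]; exact Submodule.subset_span (by simp)
        · simp only [Set.mem_singleton_iff] at h
          rw [h, hQ2']
          exact Submodule.subset_span (by simp)
      | zero => simp
      | add x y _ _ hx hy => rw [map_add]; exact Submodule.add_mem _ hx hy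
      | smul c x _ hx => rw [_root_.map_smul]; exact Submodule.smul_mem _ _ hx

lemma core_step (n : ℕ) : ∀ (E : Type) [NormedAddCommGroup E] [InnerProductSpace ℂ E]
    [FiniteDimensional ℂ E], finrank ℂ E = n →
    ∀ P Q : E →ₗ[ℂ] E, P.IsSymmetric → P ∘ₗ P = P → Q.IsSymmetric → Q ∘ₗ Q = Q →
    ∃ v : Fin n → E, Orthonormal ℂ v ∧ ∃ p : Fin n → Fin n,
      (∀ i, p (p i) = i) ∧
      (∀ i, ((p i : ℕ) = i ∨ (p i : ℕ) = i + 1 ∨ (p i : ℕ) + 1 = i)) ∧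
      ∀ i j, j ≠ i → j ≠ p i →
        (inner (𝕜 := ℂ) (v i) (P (v j)) = 0 ∧ inner (𝕜 := ℂ) (v i) (Q (v j)) = 0) := by
  induction n using Nat.strong_induction_on with
  | _ n IH =>
  intro E _ _ _ hfr P Q hPs hP2 hQs hQ2
  rcases Nat.eq_zero_or_pos n with rfl | hn
  · exact ⟨fun i => i.elim0, ⟨fun i => i.elim0, fun i j h => i.elim0⟩, id,
      fun i => i.elim0, fun i => i.elim0, fun i => i.elim0⟩
  have hpos : 0 < finrank ℂ E := hfr ▸ hn
  obtain ⟨W, hW1, hW2, hPW, hQW⟩ := exists_invariant_sub E hpos P Q hP2 hQ2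
  set d := finrank ℂ W with hd
  have hPo : ∀ x ∈ Wᗮ, P x ∈ Wᗮ := by
    intro x hx
    rw [Submodule.mem_orthogonal] at hx ⊢
    intro u hu
    rw [← hPs u x]
    exact hx _ (hPW u hu)
  have hQo : ∀ x ∈ Wᗮ, Q x ∈ Wᗮ := by
    intro x hx
    rw [Submodule.mem_orthogonal] at hx ⊢
    intro u hu
    rw [← hQs u x]
    exact hx _ (hQW u hu)
  set m := finrank ℂ Wᗮ with hm
  have hdm : d + m = n := by
    rw [hd, hm, Submodule.finrank_add_finrank_orthogonal, hfr]
  have hd1 : 1 ≤ d := hW1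
  have hd2 : d ≤ 2 := hW2
  have hmlt : m < n := by omega
  set P' := P.restrict hPo with hP'
  set Q' := Q.restrict hQo with hQ'
  have hP's : P'.IsSymmetric := by
    intro x y
    rw [Submodule.coe_inner, Submodule.coe_inner, hP', LinearMap.restrict_coe_apply,
      LinearMap.restrict_coe_apply]
    exact hPs x y
  have hQ's : Q'.IsSymmetric := by
    intro x y
    rw [Submodule.coe_inner, Submodule.coe_inner, hQ', LinearMap.restrict_coe_apply,
      LinearMap.restrict_coe_apply]
    exact hQs x y
  have hP2' : ∀ x, P (P x) = P x := fun x => by conv_rhs => rw [← hP2, LinearMap.comp_apply]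
  have hQ2' : ∀ x, Q (Q x) = Q x := fun x => by conv_rhs => rw [← hQ2, LinearMap.comp_apply]
  have hP'2 : P' ∘ₗ P' = P' := by
    refine LinearMap.ext fun x => Subtype.ext ?_
    simp only [LinearMap.comp_apply, hP', LinearMap.restrict_coe_apply]
    exact hP2' x
  have hQ'2 : Q' ∘ₗ Q' = Q' := by
    refine LinearMap.ext fun x => Subtype.ext ?_
    simp only [LinearMap.comp_apply, hQ', LinearMap.restrict_coe_apply]
    exact hQ2' x
  obtain ⟨v', hv', p', hp'1, hp'2, hp'3⟩ := IH m hmlt (↥Wᗮ) rfl P' Q' hP's hP'2 hQ's hQ'2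
  set b := stdOrthonormalBasis ℂ W with hb
  set v : Fin n → E := fun i =>
    if h : (i : ℕ) < d then ((b ⟨(i : ℕ), h⟩ : W) : E)
    else ((v' ⟨(i : ℕ) - d, by omega⟩ : ↥Wᗮ) : E) with hv
  set p : Fin n → Fin n := fun i =>
    if h : (i : ℕ) < d then ⟨d - 1 - (i : ℕ), by omega⟩
    else ⟨d + ((p' ⟨(i : ℕ) - d, by omega⟩ : Fin m) : ℕ), by omega⟩ with hp
  have hvlt : ∀ (i : Fin n) (h : (i : ℕ) < d), v i = ((b ⟨(i : ℕ), h⟩ : W) : E) := by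
    intro i h; rw [hv]; simp only [h, dif_pos]
  have hvge : ∀ (i : Fin n) (h : ¬ (i : ℕ) < d),
      v i = ((v' ⟨(i : ℕ) - d, by omega⟩ : ↥Wᗮ) : E) := by
    intro i h; rw [hv]; simp only [h, dif_neg, not_false_iff]
  have hplt : ∀ (i : Fin n) (h : (i : ℕ) < d), (p i : ℕ) = d - 1 - (i : ℕ) := by
    intro i h; rw [hp]; simp only [h, dif_pos]
  have hpge : ∀ (i : Fin n) (h : ¬ (i : ℕ) < d),
      (p i : ℕ) = d + ((p' ⟨(i : ℕ) - d, by omega⟩ : Fin m) : ℕ) := by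
    intro i h; rw [hp]; simp only [h, dif_neg, not_false_iff]
  have hvmemW : ∀ (i : Fin n), (i : ℕ) < d → v i ∈ W := by
    intro i h; rw [hvlt i h]; exact SetLike.coe_mem _
  have hvmemWo : ∀ (i : Fin n), ¬ (i : ℕ) < d → v i ∈ Wᗮ := by
    intro i h; rw [hvge i h]; exact SetLike.coe_mem _
  refine ⟨v, ?_, p, ?_, ?_, ?_⟩
  · -- orthonormality
    rw [orthonormal_iff_ite]
    intro i j
    by_cases hi : (i : ℕ) < d <;> by_cases hj : (j : ℕ) < d
    · rw [hvlt i hi, hvlt j hj, ← Submodule.coe_inner,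
        orthonormal_iff_ite.1 b.orthonormal]
      by_cases h : i = j
      · subst h; simp
      · rw [if_neg, if_neg h]
        intro hc
        exact h (Fin.ext (by simpa [Fin.ext_iff] using hc))
    · rw [hvlt i hi, hvge j hj, if_neg (by intro h; subst h; exact hj hi)]
      exact Submodule.inner_right_of_mem_orthogonal (SetLike.coe_mem _) (SetLike.coe_mem _)
    · rw [hvge i hi, hvlt j hj, if_neg (by intro h; subst h; exact hi hj)]
      exact Submodule.inner_left_of_mem_orthogonal (SetLike.coe_mem _) (SetLike.coe_mem _)
    · rw [hvge i hi, hvge j hj, ← Submodule.coe_inner,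
        orthonormal_iff_ite.1 hv']
      by_cases h : i = j
      · subst h; simp
      · rw [if_neg, if_neg h]
        intro hc
        have : (i : ℕ) - d = (j : ℕ) - d := by simpa [Fin.ext_iff] using hc
        exact h (Fin.ext (by omega))
  · -- involution
    intro i
    by_cases hi : (i : ℕ) < d
    · have h1 : (p i : ℕ) = d - 1 - (i : ℕ) := hplt i hi
      have h2 : (p i : ℕ) < d := by omega
      apply Fin.ext
      rw [hplt (p i) h2, h1]
      omega
    · have h1 : (p i : ℕ) = d + ((p' ⟨(i : ℕ) - d, by omega⟩ : Fin m) : ℕ) := hpge i hi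
      have h2 : ¬ (p i : ℕ) < d := by omega
      apply Fin.ext
      rw [hpge (p i) h2]
      have harg : (⟨((p i : ℕ)) - d, by omega⟩ : Fin m) = p' ⟨(i : ℕ) - d, by omega⟩ := by
        apply Fin.ext
        simp only [h1]
        omega
      rw [harg, hp'1]
      simp only []
      omega
  · -- adjacency
    intro i
    by_cases hi : (i : ℕ) < d
    · rw [hplt i hi]; omega
    · rw [hpge i hi]
      have := hp'2 ⟨(i : ℕ) - d, by omega⟩
      simp only [Fin.val_mk] at this
      omega
  · -- off-block vanishing
    intro i j hji hjp
    have hji' : (j : ℕ) ≠ (i : ℕ) := fun h => hji (Fin.ext h)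
    have hjp' : (j : ℕ) ≠ (p i : ℕ) := fun h => hjp (Fin.ext h)
    by_cases hi : (i : ℕ) < d <;> by_cases hj : (j : ℕ) < d
    · exfalso
      rw [hplt i hi] at hjp'
      omega
    · -- i in W-block, j in complement: P (v j) ∈ Wᗮ, v i ∈ W
      constructor
      · exact Submodule.inner_right_of_mem_orthogonal (hvmemW i hi) (hPo _ (hvmemWo j hj))
      · exact Submodule.inner_right_of_mem_orthogonal (hvmemW i hi) (hQo _ (hvmemWo j hj))
    · constructor
      · exact Submodule.inner_left_of_mem_orthogonal (hPW _ (hvmemW j hj)) (hvmemWo i hi)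
      · exact Submodule.inner_left_of_mem_orthogonal (hQW _ (hvmemW j hj)) (hvmemWo i hi)
    · -- both in complement
      have hi' : ¬ (i : ℕ) < d := hi
      rw [hpge i hi] at hjp'
      have key := hp'3 ⟨(i : ℕ) - d, by omega⟩ ⟨(j : ℕ) - d, by omega⟩
        (by intro h; apply hji'; have := congrArg Fin.val h; simp at this; omega)
        (by intro h; apply hjp'; have := congrArg Fin.val h; simp at this; omega)
      rw [hvge i hi, hvge j hj]
      constructor
      · have := key.1
        rw [Submodule.coe_inner, hP', LinearMap.restrict_coe_apply] at this
        exact this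
      · have := key.2
        rw [Submodule.coe_inner, hQ', LinearMap.restrict_coe_apply] at this
        exact this

end Aux

/-- Two orthogonal projectors on ℂⁿ admit a common orthonormal basis in which both are
block diagonal with blocks of size at most 2: there is a unitary `U` and an involutive
pairing `p` of consecutive indices such that both `Uᴴ P U` and `Uᴴ Q U` vanish outside
the corresponding diagonal blocks. -/
theorem stmt8 {n : ℕ} (P Q : Matrix (Fin n) (Fin n) ℂ)
    (hP : P.IsHermitian) (hP2 : P * P = P)
    (hQ : Q.IsHermitian) (hQ2 : Q * Q = Q) :
    ∃ U : Matrix (Fin n) (Fin n) ℂ, U ∈ Matrix.unitaryGroup (Fin n) ℂ ∧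
    ∃ p : Fin n → Fin n,
      (∀ i, p (p i) = i) ∧
      (∀ i, (p i : ℕ) = (i : ℕ) ∨ (p i : ℕ) = (i : ℕ) + 1 ∨ (p i : ℕ) + 1 = (i : ℕ)) ∧
      (∀ i j, j ≠ i → j ≠ p i → (Uᴴ * P * U) i j = 0 ∧ (Uᴴ * Q * U) i j = 0) := by
  classical
  have hcomp : ∀ A B : Matrix (Fin n) (Fin n) ℂ,
      toEuclideanLin A ∘ₗ toEuclideanLin B = toEuclideanLin (A * B) := by
    intro A B
    apply LinearMap.ext
    intro x
    simp [Matrix.toEuclideanLin_apply, Matrix.mulVec_mulVec]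
  have hPs : (toEuclideanLin P).IsSymmetric := Matrix.isHermitian_iff_isSymmetric.1 hP
  have hQs : (toEuclideanLin Q).IsSymmetric := Matrix.isHermitian_iff_isSymmetric.1 hQ
  have hPl2 : toEuclideanLin P ∘ₗ toEuclideanLin P = toEuclideanLin P := by
    rw [hcomp, hP2]
  have hQl2 : toEuclideanLin Q ∘ₗ toEuclideanLin Q = toEuclideanLin Q := by
    rw [hcomp, hQ2]
  obtain ⟨v, hortho, p, hp1, hp2, hp3⟩ := core_step n (EuclideanSpace ℂ (Fin n))
    finrank_euclideanSpace_fin (toEuclideanLin P) (toEuclideanLin Q) hPs hPl2 hQs hQl2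
  set U : Matrix (Fin n) (Fin n) ℂ := Matrix.of fun k i => v i k with hU
  have hinner : ∀ (A : Matrix (Fin n) (Fin n) ℂ) (i j : Fin n),
      (Uᴴ * A * U) i j = inner (𝕜 := ℂ) (v i) (toEuclideanLin A (v j)) := by
    intro A i j
    simp only [Matrix.mul_apply, Matrix.conjTranspose_apply, Finset.sum_mul, hU, Matrix.of_apply]
    rw [Finset.sum_comm]
    simp only [PiLp.inner_apply, RCLike.inner_apply, Matrix.toEuclideanLin_apply,
      Matrix.mulVec, dotProduct, Finset.mul_sum]
    congr 1
    funext k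
    rw [Finset.sum_mul]
    congr 1
    funext l
    simp [RCLike.star_def, mul_assoc, mul_comm, mul_left_comm]
  have hUU : Uᴴ * U = 1 := by
    ext i j
    have := orthonormal_iff_ite.1 hortho i j
    rw [PiLp.inner_apply] at this
    simp only [RCLike.inner_apply] at this
    rw [Matrix.mul_apply, Matrix.one_apply]
    simpa [Matrix.conjTranspose_apply, hU, RCLike.star_def, mul_comm] using this
  refine ⟨U, ?_, p, hp1, hp2, ?_⟩
  · rw [Matrix.mem_unitaryGroup_iff']
    rw [Matrix.star_eq_conjTranspose]
    exact hUU
  · intro i j hji hjp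
    obtain ⟨h1, h2⟩ := hp3 i j hji hjp
    exact ⟨by rw [hinner]; exact h1, by rw [hinner]; exact h2⟩
end
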